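/- The generalized Latin square graph Γ(S) of a finite semigroup S of order n is regular if and only if the quantity Q(v) = N_S(s_k) − 2N_R(v) − 2N_C(v) is constant over all vertices v = (s_i, s_j, s_k) of Γ(S). -/

import Mathlib

open Finset

variable {S : Type*} [Fintype S] [DecidableEq S]

/-- Two triples agree in exactly one coordinate. -/
def agreeOne (v w : S × S × S) : Prop :=
  (v.1 = w.1 ∧ v.2.1 ≠ w.2.1 ∧ v.2.2 ≠ w.2.2) ∨
  (v.1 ≠ w.1 ∧ v.2.1 = w.2.1 ∧ v.2.2 ≠ w.2.2) ∨
  (v.1 ≠ w.1 ∧ v.2.1 ≠ w.2.1 ∧ v.2.2 = w.2.2)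

/-- The generalized Latin square graph of a multiplication `mul` on `S`:
vertices are triples `(a,b,c)` with `mul a b = c`, two distinct vertices being
adjacent iff they agree in exactly one coordinate. -/
def GLSG (mul : S → S → S) :
    SimpleGraph {v : S × S × S // mul v.1 v.2.1 = v.2.2} where
  Adj v w := v ≠ w ∧ agreeOne v.1 w.1
  symm := by
    constructor
    rintro v w ⟨h1, h2⟩
    refine ⟨h1.symm, ?_⟩
    rcases h2 with ⟨a, b, c⟩ | ⟨a, b, c⟩ | ⟨a, b, c⟩
    · exact Or.inl ⟨a.symm, b.symm, c.symm⟩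
    · exact Or.inr (Or.inl ⟨a.symm, b.symm, c.symm⟩)
    · exact Or.inr (Or.inr ⟨a.symm, b.symm, c.symm⟩)
  loopless := by constructor; rintro v ⟨h1, _⟩; exact h1 rfl

instance (v w : S × S × S) : Decidable (agreeOne v w) := by
  unfold agreeOne; infer_instance

instance (mul : S → S → S) : DecidableRel (GLSG mul).Adj := fun v w =>
  inferInstanceAs (Decidable (v ≠ w ∧ agreeOne v.1 w.1))

/-- `N_S(k)`: the number of ordered pairs `(x,y)` with `x*y = k`. -/
def NScount (mul : S → S → S) (k : S) : ℕ :=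
  (univ.filter fun p : S × S => mul p.1 p.2 = k).card

/-- `N_R(v)` for `v = (i,j,k)`: the number of `t ≠ j` with `i*t = k`. -/
def NRcount (mul : S → S → S) (i j k : S) : ℕ :=
  (univ.filter fun t : S => t ≠ j ∧ mul i t = k).card

/-- `N_C(v)` for `v = (i,j,k)`: the number of `t ≠ i` with `t*j = k`. -/
def NCcount (mul : S → S → S) (i j k : S) : ℕ :=
  (univ.filter fun t : S => t ≠ i ∧ mul t j = k).card

/-!
Identify the vertices with pairs `(a, b) ∈ S × S`. A neighbour of `(i, j, k)` lies either in row `i`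
off column `j` and off the fibre `{ab = k}` (`n - 1 - N_R` of them), or in column `j` off row `i` and
off that fibre (`n - 1 - N_C`), or in the fibre off row `i` and column `j` (`N_S - 1 - N_R - N_C`).
Hence `deg v = Q(v) + 2n - 3`, so the degree is constant exactly when `Q` is.
-/

section Counting

variable {α β : Type*} [Fintype α] [Fintype β]

lemma card_filter_or_or_of_pairwise_disjoint [DecidableEq α] {P Q R : α → Prop}
    [DecidablePred P] [DecidablePred Q] [DecidablePred R]
    (hPQ : ∀ x, P x → ¬Q x) (hPR : ∀ x, P x → ¬R x) (hQR : ∀ x, Q x → ¬R x) :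
    #{x | P x ∨ Q x ∨ R x} = #{x | P x} + #{x | Q x} + #{x | R x} := by
  rw [filter_or, filter_or, card_union_of_disjoint, card_union_of_disjoint, add_assoc]
  · exact disjoint_filter.2 fun x _ => hQR x
  · exact disjoint_union_right.2
      ⟨disjoint_filter.2 fun x _ => hPQ x, disjoint_filter.2 fun x _ => hPR x⟩

lemma card_filter_fst_eq_and [DecidableEq α] (a : α) (P : α × β → Prop) [DecidablePred P] :
    #{p : α × β | p.1 = a ∧ P p} = #{b | P (a, b)} := by
  refine Eq.trans (congrArg card ?_) (card_map ⟨(a, ·), Prod.mk_right_injective a⟩)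
  ext ⟨x, y⟩
  simp only [mem_filter, mem_univ, true_and, mem_map, Function.Embedding.coeFn_mk, Prod.mk.injEq]
  constructor
  · rintro ⟨rfl, h⟩; exact ⟨y, h, rfl, rfl⟩
  · rintro ⟨b, h, rfl, rfl⟩; exact ⟨rfl, h⟩

lemma card_filter_snd_eq_and [DecidableEq β] (b : β) (P : α × β → Prop) [DecidablePred P] :
    #{p : α × β | p.2 = b ∧ P p} = #{a | P (a, b)} := by
  refine Eq.trans (congrArg card ?_) (card_map ⟨(·, b), Prod.mk_left_injective b⟩)
  ext ⟨x, y⟩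
  simp only [mem_filter, mem_univ, true_and, mem_map, Function.Embedding.coeFn_mk, Prod.mk.injEq]
  constructor
  · rintro ⟨rfl, h⟩; exact ⟨x, h, rfl, rfl⟩
  · rintro ⟨a, h, rfl, rfl⟩; exact ⟨rfl, h⟩

lemma card_filter_ne_and_add_one [DecidableEq α] {P : α → Prop} [DecidablePred P] {j : α}
    (hj : P j) : #{t | t ≠ j ∧ P t} + 1 = #{t | P t} := by
  rw [← filter_filter, filter_ne', filter_erase, card_erase_add_one (by simpa using hj)]

lemma card_filter_ne_and_not_add_card_filter_ne_and_add_one [DecidableEq α] (P : α → Prop)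
    [DecidablePred P] (j : α) :
    #{t | t ≠ j ∧ ¬P t} + #{t | t ≠ j ∧ P t} + 1 = Fintype.card α := by
  have hsplit := card_filter_add_card_filter_not (s := {t | t ≠ j}) (fun t => ¬P t)
  simp only [filter_filter, not_not] at hsplit
  rw [hsplit, filter_ne', card_erase_add_one (mem_univ j), card_univ]

end Counting

lemma not_agreeOne_self {T : Type*} (v : T × T × T) : ¬agreeOne v v := by
  rintro (⟨-, h, -⟩ | ⟨h, -⟩ | ⟨h, -⟩) <;> exact h rfl

lemma agreeOne_iff {T : Type*} (i j k a b c : T) :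
    agreeOne (i, j, k) (a, b, c) ↔
      (a = i ∧ b ≠ j ∧ c ≠ k) ∨ (b = j ∧ a ≠ i ∧ c ≠ k) ∨ (a ≠ i ∧ b ≠ j ∧ c = k) := by
  simp only [agreeOne, @eq_comm _ i, @eq_comm _ j, @eq_comm _ k, ne_eq]
  tauto

section GLSG

variable (mul : S → S → S)

def multiplicationTableEquiv : {v : S × S × S // mul v.1 v.2.1 = v.2.2} ≃ S × S where
  toFun v := (v.1.1, v.1.2.1)
  invFun p := ⟨(p.1, p.2, mul p.1 p.2), rfl⟩
  left_inv v := Subtype.ext (Prod.ext rfl (Prod.ext rfl v.2))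
  right_inv _ := rfl

lemma degree_GLSG (v : {v : S × S × S // mul v.1 v.2.1 = v.2.2}) :
    (GLSG mul).degree v = #{p : S × S | agreeOne v.1 (p.1, p.2, mul p.1 p.2)} := by
  rw [← SimpleGraph.card_neighborFinset_eq_degree]
  refine card_equiv (multiplicationTableEquiv mul) fun w => ?_
  rw [SimpleGraph.mem_neighborFinset, mem_filter_univ]
  change v ≠ w ∧ agreeOne v.1 w.1 ↔ agreeOne v.1 (w.1.1, w.1.2.1, mul w.1.1 w.1.2.1)
  rw [w.2]
  exact and_iff_right_of_imp fun h hvw => not_agreeOne_self w.1 (hvw ▸ h)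

lemma card_sameRow_add_NRcount (i j k : S) :
    #{p : S × S | p.1 = i ∧ p.2 ≠ j ∧ mul p.1 p.2 ≠ k} + NRcount mul i j k + 1
      = Fintype.card S := by
  rw [card_filter_fst_eq_and]
  exact card_filter_ne_and_not_add_card_filter_ne_and_add_one _ j

lemma card_sameCol_add_NCcount (i j k : S) :
    #{p : S × S | p.2 = j ∧ p.1 ≠ i ∧ mul p.1 p.2 ≠ k} + NCcount mul i j k + 1
      = Fintype.card S := by
  rw [card_filter_snd_eq_and]
  exact card_filter_ne_and_not_add_card_filter_ne_and_add_one _ i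

lemma NScount_eq {i j k : S} (hv : mul i j = k) :
    NScount mul k = (NRcount mul i j k + 1) + NCcount mul i j k
      + #{p : S × S | p.1 ≠ i ∧ p.2 ≠ j ∧ mul p.1 p.2 = k} := by
  have hrow : #{p : S × S | p.1 = i ∧ mul p.1 p.2 = k} = NRcount mul i j k + 1 :=
    (card_filter_fst_eq_and i _).trans (card_filter_ne_and_add_one (P := (mul i · = k)) hv).symm
  have hcol : #{p : S × S | p.2 = j ∧ p.1 ≠ i ∧ mul p.1 p.2 = k} = NCcount mul i j k :=
    card_filter_snd_eq_and j _
  rw [← hrow, ← hcol, ← card_filter_or_or_of_pairwise_disjoint (by tauto) (by tauto) (by tauto),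
    NScount]
  congr 1
  ext p
  simp only [mem_filter_univ]
  tauto

lemma degree_GLSG_add (v : {v : S × S × S // mul v.1 v.2.1 = v.2.2}) :
    (GLSG mul).degree v + 2 * NRcount mul v.1.1 v.1.2.1 v.1.2.2
      + 2 * NCcount mul v.1.1 v.1.2.1 v.1.2.2 + 3
      = NScount mul v.1.2.2 + 2 * Fintype.card S := by
  obtain ⟨⟨i, j, k⟩, hv : mul i j = k⟩ := v
  have hdeg : (GLSG mul).degree ⟨(i, j, k), hv⟩ =
      #{p : S × S | p.1 = i ∧ p.2 ≠ j ∧ mul p.1 p.2 ≠ k}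
        + #{p : S × S | p.2 = j ∧ p.1 ≠ i ∧ mul p.1 p.2 ≠ k}
        + #{p : S × S | p.1 ≠ i ∧ p.2 ≠ j ∧ mul p.1 p.2 = k} := by
    simp only [degree_GLSG, agreeOne_iff]
    exact card_filter_or_or_of_pairwise_disjoint (by tauto) (by tauto) (by tauto)
  have := card_sameRow_add_NRcount mul i j k
  have := card_sameCol_add_NCcount mul i j k
  have := NScount_eq mul hv
  dsimp only
  omega

end GLSG

theorem stmt3_general (mul : S → S → S) :
    (∃ d, (GLSG mul).IsRegularOfDegree d) ↔
      (∃ q : ℤ, ∀ v : {v : S × S × S // mul v.1 v.2.1 = v.2.2},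
        (NScount mul v.1.2.2 : ℤ)
          - 2 * NRcount mul v.1.1 v.1.2.1 v.1.2.2
          - 2 * NCcount mul v.1.1 v.1.2.1 v.1.2.2 = q) := by
  have hdeg (v : {v : S × S × S // mul v.1 v.2.1 = v.2.2}) :
      ((GLSG mul).degree v : ℤ) = NScount mul v.1.2.2 - 2 * NRcount mul v.1.1 v.1.2.1 v.1.2.2
        - 2 * NCcount mul v.1.1 v.1.2.1 v.1.2.2 + 2 * Fintype.card S - 3 := by
    have := degree_GLSG_add mul v
    omega
  constructor
  · rintro ⟨d, hd⟩
    exact ⟨d - 2 * Fintype.card S + 3, fun v => by linarith [hdeg v, hd v]⟩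
  · rintro ⟨q, hq⟩
    refine ⟨(q + 2 * Fintype.card S - 3).toNat, fun v => ?_⟩
    have := hdeg v
    have := hq v
    omega

/-- `Γ(S)` is regular iff `Q(v) = N_S(s_k) - 2N_R(v) - 2N_C(v)` is constant. -/
theorem stmt3 (mul : S → S → S)
    (hassoc : ∀ a b c : S, mul (mul a b) c = mul a (mul b c)) :
    (∃ d, (GLSG mul).IsRegularOfDegree d) ↔
      (∃ q : ℤ, ∀ v : {v : S × S × S // mul v.1 v.2.1 = v.2.2},
        (NScount mul v.1.2.2 : ℤ)
          - 2 * NRcount mul v.1.1 v.1.2.1 v.1.2.2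
          - 2 * NCcount mul v.1.1 v.1.2.1 v.1.2.2 = q) :=
  stmt3_general mul
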